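/- Fix ℓ ≥ 3, write t = aℓ + b with 0 ≤ b ≤ ℓ−2, and let L_t(x) = (d(x)+1)^{t+1}(1 − d(x)^{ℓ−1−b})/(1 − d(x)^ℓ) where d(x) = x·c(x)² and c(x) is the Catalan series. Then L_t(x) = (p_{ℓ−1−b}(x)/p_ℓ(x))·c(x)^{aℓ}, where p_1=p_2=1 and p_{i+1}=p_i − x p_{i−1}. -/

import Mathlib

open PowerSeries

/-- The Catalan generating function `c(x)` in `ℚ[[x]]`. -/
noncomputable def catalanSeries : PowerSeries ℚ :=
  PowerSeries.mk fun n => (catalan n : ℚ)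

/-- `d(x) = x·c(x)²`. -/
noncomputable def dSeries : PowerSeries ℚ :=
  PowerSeries.X * _root_.catalanSeries ^ 2

/-- The polynomials `p_1 = p_2 = 1`, `p_{i+1} = p_i − x·p_{i−1}`, viewed in
`ℚ[[x]]` (we also set `p_0 = 1`, which is irrelevant). -/
noncomputable def pSeries : ℕ → PowerSeries ℚ
  | 0 => 1
  | 1 => 1
  | 2 => 1
  | (n + 3) => pSeries (n + 2) - PowerSeries.X * pSeries (n + 1)

/-!
Write `c` for the Catalan series and `d = x c²`, so that `c = 1 + d` by Catalan's functional
equation `x c² + 1 = c`. Induction on the recurrence of `p` gives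
`1 - d^(n+1) = p_(n+1) c^n (1 - d)`: the step is
`c (1 - d^(n+2)) - x c² (1 - d^(n+1)) = 1 - d^(n+3)`. Applying this with `n + 1 = ℓ - 1 - b` and
`n + 1 = ℓ` turns the quotient `(1 - d^(ℓ-1-b)) / (1 - d^ℓ)` into
`(p_(ℓ-1-b) / p_ℓ) c^(-(b+1))`, and `c^(t+1) c^(-(b+1)) = c^(aℓ)`.
-/

theorem PowerSeries.mul_inv_eq_mul_inv_iff {k : Type*} [Field k] {φ₁ φ₂ ψ₁ ψ₂ : k⟦X⟧}
    (h₁ : constantCoeff ψ₁ ≠ 0) (h₂ : constantCoeff ψ₂ ≠ 0) :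
    φ₁ * ψ₁⁻¹ = φ₂ * ψ₂⁻¹ ↔ φ₁ * ψ₂ = φ₂ * ψ₁ := by
  rw [eq_mul_inv_iff_mul_eq h₂, mul_right_comm, eq_comm, eq_mul_inv_iff_mul_eq h₁, eq_comm]

theorem catalanSeries_eq_map :
    _root_.catalanSeries = map (Nat.castRingHom ℚ) PowerSeries.catalanSeries := by
  ext n
  simp [_root_.catalanSeries, PowerSeries.catalanSeries_coeff]

theorem dSeries_add_one : dSeries + 1 = _root_.catalanSeries := by
  have h := congrArg (map (Nat.castRingHom ℚ)) PowerSeries.catalanSeries_sq_mul_X_add_one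
  rw [map_add, map_mul, map_pow, map_X, map_one, ← catalanSeries_eq_map] at h
  rw [dSeries, mul_comm, h]

theorem constantCoeff_dSeries : constantCoeff dSeries = 0 := by
  simp [dSeries]

theorem constantCoeff_pSeries (n : ℕ) : constantCoeff (pSeries n) = 1 := by
  induction n using Nat.strong_induction_on with
  | _ n ih =>
    match n with
    | 0 | 1 | 2 => simp [pSeries]
    | n + 3 => simp [pSeries, ih (n + 2) (by omega)]

theorem one_sub_dSeries_pow_succ (n : ℕ) :
    1 - dSeries ^ (n + 1) = pSeries (n + 1) * _root_.catalanSeries ^ n * (1 - dSeries) := by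
  induction n using Nat.twoStepInduction with
  | zero => simp [pSeries]
  | one =>
    simp only [pSeries, one_mul, pow_one]
    linear_combination (1 - dSeries) * dSeries_add_one
  | more n ih₀ ih₁ =>
    have hd : dSeries = X * _root_.catalanSeries ^ 2 := rfl
    rw [show pSeries (n + 3) = pSeries (n + 2) - X * pSeries (n + 1) from rfl]
    linear_combination _root_.catalanSeries * ih₁ - dSeries * ih₀ -
      pSeries (n + 1) * _root_.catalanSeries ^ n * (1 - dSeries) * hd +
      (1 - dSeries ^ (n + 2)) * dSeries_add_one

theorem stmt_11 (ℓ a b : ℕ) (hℓ : 3 ≤ ℓ) (hb : b ≤ ℓ - 2) :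
    (dSeries + 1) ^ (a * ℓ + b + 1) * (1 - dSeries ^ (ℓ - 1 - b)) *
        (1 - dSeries ^ ℓ)⁻¹ =
      pSeries (ℓ - 1 - b) * (pSeries ℓ)⁻¹ * _root_.catalanSeries ^ (a * ℓ) := by
  obtain ⟨n, rfl⟩ : ∃ n, ℓ = b + n + 2 := ⟨ℓ - b - 2, by omega⟩
  have hm : b + n + 2 - 1 - b = n + 1 := by omega
  have hℓ' : constantCoeff (1 - dSeries ^ (b + n + 2)) ≠ 0 := by simp [constantCoeff_dSeries]
  have hp : constantCoeff (pSeries (b + n + 2)) ≠ 0 := by simp [constantCoeff_pSeries]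
  rw [hm, mul_right_comm _ (pSeries _)⁻¹, PowerSeries.mul_inv_eq_mul_inv_iff hℓ' hp,
    dSeries_add_one, one_sub_dSeries_pow_succ n, one_sub_dSeries_pow_succ (b + n + 1)]
  ring
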